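/- For every integer d ≥ 1, O_d ≤ F_d, where (F_d)_{d≥1} is the Fibonacci sequence with F_1 = F_2 = 1 and F_d = F_{d-1} + F_{d-2} for d ≥ 3. -/

import Mathlib

/-- The Macaulay bound `a^⟨t⟩`: writing the (unique, greedy) binomial expansion
`a = C(k(t),t) + C(k(t-1),t-1) + ⋯ + C(k(j),j)` with `k(t) > ⋯ > k(j) ≥ j ≥ 1`,
`macaulay t a = C(k(t)+1,t+1) + C(k(t-1)+1,t) + ⋯ + C(k(j)+1,j+1)`.
(The value at `t = 0` is irrelevant for the definitions below.) -/
def macaulay : ℕ → ℕ → ℕ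
  | 0, a => a
  | t+1, a =>
    if a = 0 then 0
    else
      Nat.choose (Nat.findGreatest (fun m => Nat.choose m (t+1) ≤ a) (a + t + 1) + 1) (t+2)
        + macaulay t (a - Nat.choose
            (Nat.findGreatest (fun m => Nat.choose m (t+1) ≤ a) (a + t + 1)) (t+1))

/-- A finite O-sequence `(a_0, a_1, …, a_s)`, encoded as a nonempty list of
positive integers with `a_0 = 1` and `a_{t+1} ≤ a_t^⟨t⟩` for all `1 ≤ t ≤ s-1`. -/
def IsOSeq (l : List ℕ) : Prop :=
  l ≠ [] ∧ (∀ x ∈ l, 0 < x) ∧ l.getD 0 0 = 1 ∧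
    ∀ t : ℕ, 1 ≤ t → t + 1 < l.length → l.getD (t+1) 0 ≤ macaulay t (l.getD t 0)

/-- `numOSeq d` = the number `O_d` of finite O-sequences of multiplicity `d`. -/
noncomputable def numOSeq (d : ℕ) : ℕ := {l : List ℕ | IsOSeq l ∧ l.sum = d}.ncard

/-- `numASeq d` = the number `A_d` of finite O-sequences of multiplicity `d`
whose last entry is strictly greater than `1`. -/
noncomputable def numASeq (d : ℕ) : ℕ :=
  {l : List ℕ | IsOSeq l ∧ l.sum = d ∧ 1 < l.getLastD 0}.ncard

/-- `numOCond p n k d` = the number `O(p,n,k,d)` of finite O-sequences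
`(a_0,…,a_s)` of multiplicity `d` with `s ≤ n`, `a_i = C(p-1+i, i)` for all
`0 ≤ i ≤ k` (in particular `s ≥ k`), and `a_i < C(p-1+i, i)` for `k < i ≤ s`. -/
noncomputable def numOCond (p n k d : ℕ) : ℕ :=
  {l : List ℕ | IsOSeq l ∧ l.sum = d ∧ l.length - 1 ≤ n ∧ k ≤ l.length - 1 ∧
    (∀ i ≤ k, l.getD i 0 = Nat.choose (p - 1 + i) i) ∧
    (∀ i : ℕ, k < i → i < l.length → l.getD i 0 < Nat.choose (p - 1 + i) i)}.ncard



lemma macaulay_zero (t : ℕ) : macaulay t 0 = 0 := by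
  cases t <;> simp [macaulay]

lemma macaulay_pos (t : ℕ) {a : ℕ} (ha : 0 < a) : 0 < macaulay t a := by
  cases t with
  | zero => simpa [macaulay]
  | succ s =>
    rw [macaulay]
    have h1 : s + 1 ≤ Nat.findGreatest (fun m => Nat.choose m (s+1) ≤ a) (a + s + 1) := by
      apply Nat.le_findGreatest (by omega)
      simpa using (show 1 ≤ a by omega)
    have : 0 < Nat.choose (Nat.findGreatest (fun m => Nat.choose m (s+1) ≤ a) (a + s + 1) + 1) (s+2) :=
      Nat.choose_pos (by omega)
    rw [if_neg (by omega)]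
    omega

lemma macaulay_one {t : ℕ} (ht : 1 ≤ t) : macaulay t 1 = 1 := by
  obtain ⟨s, rfl⟩ : ∃ s, t = s + 1 := ⟨t - 1, by omega⟩
  rw [macaulay]
  have hg : Nat.findGreatest (fun m => Nat.choose m (s+1) ≤ 1) (1 + s + 1) = s + 1 := by
    rw [Nat.findGreatest_eq_iff]
    refine ⟨by omega, fun _ => by simp, fun n hn hn' hP => ?_⟩
    obtain rfl : n = s + 2 := by omega
    simp [Nat.choose_succ_self_right] at hP
  rw [if_neg (by omega), hg]
  simp [macaulay_zero]




lemma isOSeq_concat_iff {m : List ℕ} (hm : m ≠ []) (a : ℕ) :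
    IsOSeq (m ++ [a]) ↔ IsOSeq m ∧ 0 < a ∧
      (2 ≤ m.length → a ≤ macaulay (m.length - 1) (m.getD (m.length - 1) 0)) := by
  have hlen : 0 < m.length := List.length_pos_iff.mpr hm
  have hgd : ∀ i, i < m.length → (m ++ [a]).getD i 0 = m.getD i 0 := fun i h =>
    List.getD_append _ _ _ _ h
  have hga : (m ++ [a]).getD m.length 0 = a := by
    rw [List.getD_append_right _ _ _ _ (le_refl _)]
    simp
  constructor
  · rintro ⟨-, hpos, hhead, hstep⟩
    refine ⟨⟨hm, fun x hx => hpos x (by simp [hx]), ?_, fun t ht htl => ?_⟩, ?_, fun h2 => ?_⟩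
    · rw [← hgd 0 hlen]; exact hhead
    · have := hstep t ht (by simp; omega)
      rwa [hgd _ (by omega), hgd _ (by omega)] at this
    · exact hpos a (by simp)
    · have := hstep (m.length - 1) (by omega) (by simp; omega)
      rwa [show m.length - 1 + 1 = m.length by omega, hga, hgd _ (by omega)] at this
  · rintro ⟨⟨-, hpos, hhead, hstep⟩, hapos, hlast⟩
    refine ⟨by simp, fun x hx => ?_, ?_, fun t ht htl => ?_⟩
    · rcases List.mem_append.mp hx with h | h
      · exact hpos x h
      · simp at h; omega
    · rw [hgd 0 hlen]; exact hhead
    · simp at htl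
      rcases lt_or_eq_of_le (show t + 1 ≤ m.length by omega) with h | h
      · rw [hgd _ h, hgd _ (by omega)]; exact hstep t ht h
      · rw [h, hga, hgd _ (by omega)]
        have := hlast (by omega)
        rwa [show m.length - 1 = t by omega] at this





def OSet (d : ℕ) : Set (List ℕ) := {l : List ℕ | IsOSeq l ∧ l.sum = d}
def ASet (d : ℕ) : Set (List ℕ) := {l : List ℕ | IsOSeq l ∧ l.sum = d ∧ 1 < l.getLastD 0}

lemma OSet_finite (d : ℕ) : (OSet d).Finite := by
  have h : OSet d ⊆ (fun l : List (Fin (d+1)) => l.map Fin.val) '' {l | l.length ≤ d} := by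
    rintro l ⟨⟨-, hpos, -, -⟩, hsum⟩
    have hbound : ∀ x ∈ l, x < d + 1 := fun x hx => by
      have := List.le_sum_of_mem hx
      omega
    refine ⟨l.pmap (fun x h => (⟨x, h⟩ : Fin (d+1))) hbound, ?_, ?_⟩
    · simp only [Set.mem_setOf_eq, List.length_pmap]
      have := List.length_le_sum_of_one_le l (fun i hi => hpos i hi)
      omega
    · simp [List.map_pmap]
  exact Set.Finite.subset (Set.Finite.image _ (List.finite_length_le _ d)) h

lemma ASet_finite (d : ℕ) : (ASet d).Finite :=
  (OSet_finite d).subset (fun l hl => ⟨hl.1, hl.2.1⟩)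

lemma mem_OSet_one {l : List ℕ} (h : l ∈ OSet 1) : l = [1] := by
  obtain ⟨⟨hne, hpos, hhead, -⟩, hsum⟩ := h
  cases l with
  | nil => exact absurd rfl hne
  | cons x r =>
    simp at hhead
    subst hhead
    cases r with
    | nil => rfl
    | cons y r' =>
      have := hpos y (by simp)
      simp [List.sum_cons] at hsum
      omega

lemma mem_OSet_two {l : List ℕ} (h : l ∈ OSet 2) : l = [1, 1] := by
  obtain ⟨⟨hne, hpos, hhead, -⟩, hsum⟩ := h
  cases l with
  | nil => exact absurd rfl hne
  | cons x r =>
    simp at hhead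
    subst hhead
    cases r with
    | nil => simp at hsum
    | cons y r' =>
      have hy := hpos y (by simp)
      cases r' with
      | nil =>
        have hy1 : y = 1 := by simp [List.sum_cons] at hsum; omega
        simp [hy1]
      | cons z r'' =>
        have hz := hpos z (by simp)
        simp [List.sum_cons] at hsum
        omega







lemma exists_concat {l : List ℕ} (h : l ≠ []) : ∃ m a, l = m ++ [a] := by
  rcases List.eq_nil_or_concat l with rfl | ⟨m, a, rfl⟩
  · exact absurd rfl h
  · exact ⟨m, a, List.concat_eq_append⟩

lemma concat_getLastD {l : List ℕ} (h : l ≠ []) : l.dropLast ++ [l.getLastD 0] = l := by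
  have h1 : l.getLastD 0 = l.getLast h := by
    rw [List.getLastD_eq_getLast?, List.getLast?_eq_getLast h]
    rfl
  rw [h1, List.dropLast_append_getLast h]

lemma getD_last_eq_getLastD {l : List ℕ} (h : l ≠ []) :
    l.getD (l.length - 1) 0 = l.getLastD 0 := by
  obtain ⟨m, a, rfl⟩ := exists_concat h
  · rw [List.getLastD_concat]
    rw [List.getD_append_right _ _ _ _ (by simp)]
    simp

lemma IsOSeq.ne_nil {l : List ℕ} (h : IsOSeq l) : l ≠ [] := h.1

lemma IsOSeq.sum_pos {l : List ℕ} (h : IsOSeq l) : 1 ≤ l.sum := by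
  obtain ⟨hne, hpos, -, -⟩ := h
  cases l with
  | nil => exact absurd rfl hne
  | cons x r => have := hpos x (by simp); simp [List.sum_cons]; omega

lemma IsOSeq.getLastD_pos {l : List ℕ} (h : IsOSeq l) : 0 < l.getLastD 0 := by
  obtain ⟨m, a, rfl⟩ := exists_concat h.1
  · rw [List.getLastD_concat]
    exact h.2.1 a (by simp)

/-- decomposition of a member of `ASet d` -/
lemma ASet_decomp {d : ℕ} {l : List ℕ} (h : l ∈ ASet d) :
    ∃ m a, l = m ++ [a] ∧ m ≠ [] ∧ IsOSeq m ∧ 2 ≤ a ∧ m.sum + a = d ∧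
      (2 ≤ m.length → a ≤ macaulay (m.length - 1) (m.getD (m.length - 1) 0)) := by
  obtain ⟨hl, hsum, hlast⟩ := h
  obtain ⟨m, a, rfl⟩ := exists_concat hl.1
  · rw [List.getLastD_concat] at hlast
    have hm : m ≠ [] := by
      rintro rfl
      have := hl.2.2.1
      simp at this
      omega
    rw [isOSeq_concat_iff hm] at hl
    exact ⟨m, a, rfl, hm, hl.1, by omega, by simpa using hsum, hl.2.2⟩

lemma mem_ASet_three {l : List ℕ} (h : l ∈ ASet 3) : l = [1, 2] := by
  obtain ⟨m, a, rfl, hm, hOm, ha, hsum, -⟩ := ASet_decomp h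
  have h1 := hOm.sum_pos
  have ha2 : a = 2 := by omega
  have : m ∈ OSet 1 := ⟨hOm, by omega⟩
  rw [mem_OSet_one this, ha2]
  rfl

lemma mem_ASet_four {l : List ℕ} (h : l ∈ ASet 4) : l = [1, 3] := by
  obtain ⟨m, a, rfl, hm, hOm, ha, hsum, hmac⟩ := ASet_decomp h
  have h1 := hOm.sum_pos
  rcases (by omega : a = 2 ∨ a = 3) with rfl | rfl
  · exfalso
    have : m ∈ OSet 2 := ⟨hOm, by omega⟩
    have hm2 := mem_OSet_two this
    subst hm2
    have := hmac (by simp)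
    simp at this
    rw [macaulay_one le_rfl] at this
    omega
  · have : m ∈ OSet 1 := ⟨hOm, by omega⟩
    rw [mem_OSet_one this]
    rfl

lemma card_OSet_le {d : ℕ} (hd : 2 ≤ d) :
    (OSet d).ncard ≤ (OSet (d-1)).ncard + (ASet d).ncard := by
  have hsplit : OSet d = {l | IsOSeq l ∧ l.sum = d ∧ l.getLastD 0 = 1} ∪ ASet d := by
    ext l
    constructor
    · rintro ⟨h1, h2⟩
      have := h1.getLastD_pos
      rcases (by omega : l.getLastD 0 = 1 ∨ 1 < l.getLastD 0) with h | h
      · exact Or.inl ⟨h1, h2, h⟩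
      · exact Or.inr ⟨h1, h2, h⟩
    · rintro (⟨h1, h2, -⟩ | ⟨h1, h2, -⟩) <;> exact ⟨h1, h2⟩
  rw [hsplit]
  refine le_trans (Set.ncard_union_le _ _) (Nat.add_le_add ?_ le_rfl)
  apply Set.ncard_le_ncard_of_injOn List.dropLast _ _ (OSet_finite (d-1))
  · rintro l ⟨hl, hsum, hlast⟩
    have hln : l ≠ [] := hl.1
    have hcon : l.dropLast ++ [1] = l := by rw [← hlast]; exact concat_getLastD hln
    have hm : l.dropLast ≠ [] := by
      rintro hnil
      rw [hnil] at hcon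
      rw [← hcon] at hsum
      simp at hsum
      omega
    rw [← hcon] at hl hsum
    rw [isOSeq_concat_iff hm] at hl
    refine ⟨hl.1, ?_⟩
    simp at hsum
    omega
  · rintro l1 ⟨hl1, -, hlast1⟩ l2 ⟨hl2, -, hlast2⟩ heq
    have e1 : l1.dropLast ++ [1] = l1 := by rw [← hlast1]; exact concat_getLastD hl1.1
    have e2 : l2.dropLast ++ [1] = l2 := by rw [← hlast2]; exact concat_getLastD hl2.1
    rw [← e1, ← e2, heq]

lemma card_ASet_le {d : ℕ} (hd : 4 ≤ d) :
    (ASet d).ncard ≤ (ASet (d-1)).ncard + (ASet (d-2)).ncard := by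
  have hsplit : ASet d = {l | IsOSeq l ∧ l.sum = d ∧ 3 ≤ l.getLastD 0} ∪
      {l | IsOSeq l ∧ l.sum = d ∧ l.getLastD 0 = 2} := by
    ext l
    constructor
    · rintro ⟨h1, h2, h3⟩
      rcases (by omega : l.getLastD 0 = 2 ∨ 3 ≤ l.getLastD 0) with h | h
      · exact Or.inr ⟨h1, h2, h⟩
      · exact Or.inl ⟨h1, h2, h⟩
    · rintro (⟨h1, h2, h3⟩ | ⟨h1, h2, h3⟩) <;> exact ⟨h1, h2, by omega⟩
  rw [hsplit]
  refine le_trans (Set.ncard_union_le _ _) (Nat.add_le_add ?_ ?_)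
  · -- last entry ≥ 3 : decrement the last entry
    apply Set.ncard_le_ncard_of_injOn (fun l => l.dropLast ++ [l.getLastD 0 - 1]) _ _
      (ASet_finite (d-1))
    · rintro l ⟨hl, hsum, hlast⟩
      obtain ⟨m, a, rfl, hm, hOm, -, hsuma, hmac⟩ := ASet_decomp ⟨hl, hsum, by omega⟩
      rw [List.getLastD_concat] at hlast
      simp only [List.getLastD_concat, List.dropLast_concat]
      refine ⟨?_, ?_, ?_⟩
      · rw [isOSeq_concat_iff hm]
        exact ⟨hOm, by omega, fun h2 => le_trans (by omega) (hmac h2)⟩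
      · simp; omega
      · rw [List.getLastD_concat]; omega
    · rintro l1 ⟨hl1, -, hlast1⟩ l2 ⟨hl2, -, hlast2⟩ heq
      simp only at heq
      have h1 : l1.dropLast = l2.dropLast ∧ l1.getLastD 0 - 1 = l2.getLastD 0 - 1 := by
        have := List.append_inj' heq rfl
        simpa using this
      have e1 := concat_getLastD hl1.1
      have e2 := concat_getLastD hl2.1
      have hv : l1.getLastD 0 = l2.getLastD 0 := by
        have := h1.2
        omega
      rw [← e1, ← e2, h1.1, hv]
  · -- last entry = 2 : drop it
    apply Set.ncard_le_ncard_of_injOn List.dropLast _ _ (ASet_finite (d-2))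
    · rintro l ⟨hl, hsum, hlast⟩
      obtain ⟨m, a, rfl, hm, hOm, -, hsuma, hmac⟩ := ASet_decomp ⟨hl, hsum, by omega⟩
      rw [List.getLastD_concat] at hlast
      subst hlast
      rw [List.dropLast_concat]
      have hmlen : 2 ≤ m.length := by
        rcases m with - | ⟨x, r⟩
        · exact absurd rfl hm
        · rcases r with - | ⟨y, r'⟩
          · exfalso
            have : x = 1 := by simpa using hOm.2.2.1
            simp [this] at hsuma
            omega
          · simp only [List.length_cons]; omega
      refine ⟨hOm, by omega, ?_⟩
      have hgl := getD_last_eq_getLastD hm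
      have := hmac hmlen
      rw [hgl] at this
      have hpos := hOm.getLastD_pos
      by_contra hle
      have h1 : m.getLastD 0 = 1 := by omega
      rw [h1, macaulay_one (by omega)] at this
      omega
    · rintro l1 ⟨hl1, -, hlast1⟩ l2 ⟨hl2, -, hlast2⟩ heq
      have e1 : l1.dropLast ++ [2] = l1 := by rw [← hlast1]; exact concat_getLastD hl1.1
      have e2 : l2.dropLast ++ [2] = l2 := by rw [← hlast2]; exact concat_getLastD hl2.1
      rw [← e1, ← e2, heq]



lemma ncard_le_one_of_subset_singleton {s : Set (List ℕ)} {a : List ℕ}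
    (h : s ⊆ {a}) : s.ncard ≤ 1 := by
  calc s.ncard ≤ ({a} : Set (List ℕ)).ncard :=
        Set.ncard_le_ncard h (Set.finite_singleton a)
    _ = 1 := Set.ncard_singleton a

lemma ncard_ASet_le_fib : ∀ d, 3 ≤ d → (ASet d).ncard ≤ Nat.fib (d-2) := by
  intro d
  induction d using Nat.strong_induction_on with
  | _ d ih =>
    intro hd
    rcases (by omega : d = 3 ∨ d = 4 ∨ 5 ≤ d) with rfl | rfl | h5
    · simpa using ncard_le_one_of_subset_singleton (fun l hl => mem_ASet_three hl)
    · simpa using ncard_le_one_of_subset_singleton (fun l hl => mem_ASet_four hl)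
    · have hle := card_ASet_le (show 4 ≤ d by omega)
      have h1 := ih (d-1) (by omega) (by omega)
      have h2 := ih (d-2) (by omega) (by omega)
      have hfib : Nat.fib (d-2) = Nat.fib (d-3) + Nat.fib (d-4) := by
        obtain ⟨e, rfl⟩ : ∃ e, d = e + 5 := ⟨d-5, by omega⟩
        rw [(by omega : e + 5 - 2 = (e + 1) + 2), (by omega : e + 5 - 3 = e + 2),
          (by omega : e + 5 - 4 = e + 1), Nat.fib_add_two, (by omega : e + 1 + 1 = e + 2)]
        omega
      have hd1 : d - 1 - 2 = d - 3 := by omega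
      have hd2 : d - 2 - 2 = d - 4 := by omega
      rw [hd1] at h1
      rw [hd2] at h2
      omega


/-- For every integer `d ≥ 1`, `O_d ≤ F_d`, where `(F_d)` is the
Fibonacci sequence with `F_1 = F_2 = 1` and `F_d = F_{d-1} + F_{d-2}`
(so `F_d = Nat.fib d`). -/
theorem Od_le_fib (d : ℕ) (hd : 1 ≤ d) : numOSeq d ≤ Nat.fib d := by

  have hnum : ∀ e, numOSeq e = (OSet e).ncard := fun e => rfl
  induction d using Nat.strong_induction_on with
  | _ d ih =>
    rcases (by omega : d = 1 ∨ d = 2 ∨ 3 ≤ d) with rfl | rfl | h3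
    · rw [hnum]
      simpa using ncard_le_one_of_subset_singleton (fun l hl => mem_OSet_one hl)
    · rw [hnum]
      simpa using ncard_le_one_of_subset_singleton (fun l hl => mem_OSet_two hl)
    · have hle := card_OSet_le (show 2 ≤ d by omega)
      have h1 := ih (d-1) (by omega) (by omega)
      have h2 := ncard_ASet_le_fib d h3
      rw [hnum] at h1 ⊢
      have hfib : Nat.fib d = Nat.fib (d-1) + Nat.fib (d-2) := by
        obtain ⟨e, rfl⟩ : ∃ e, d = e + 3 := ⟨d-3, by omega⟩
        rw [(by omega : e + 3 = (e + 1) + 2), (by omega : e + 3 - 1 = e + 2),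
          (by omega : e + 3 - 2 = e + 1), Nat.fib_add_two, (by omega : e + 1 + 1 = e + 2)]
        omega
      omega
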